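/- arXiv:2111.08456 — 3 statements merged into one kernel-verified Lean document; each statement's English description precedes it below -/
import Mathlib

section
/- The NIG summation operation is associative: for any real parameter tuples (δ₁,γ₁,α₁,β₁), (δ₂,γ₂,α₂,β₂), (δ₃,γ₃,α₃,β₃) with γ₁, γ₂, γ₃ > 0, the NIG summation of (the NIG summation of the first two tuples) with the third tuple equals, in all four components, the NIG summation of the first tuple with (the NIG summation of the last two tuples). -/
/-- Parameters of a Normal-Inverse-Gamma (NIG) distribution. -/
structure NIG where
  δ : ℝ
  γ : ℝ
  α : ℝ
  β : ℝ

/-- The NIG summation operation of the paper (Definition 1). -/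
noncomputable def nigAdd (p q : NIG) : NIG where
  δ := (p.γ * p.δ + q.γ * q.δ) / (p.γ + q.γ)
  γ := p.γ + q.γ
  α := p.α + q.α + 1 / 2
  β := p.β + q.β
      + (1 / 2) * p.γ * (p.δ - (p.γ * p.δ + q.γ * q.δ) / (p.γ + q.γ)) ^ 2
      + (1 / 2) * q.γ * (q.δ - (p.γ * p.δ + q.γ * q.δ) / (p.γ + q.γ)) ^ 2

lemma nig_beta_aux1 (a b c d : ℝ) (h : a + b ≠ 0) :
    1 / 2 * a * (c - (a * c + b * d) / (a + b)) ^ 2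
      = a * b ^ 2 * (c - d) ^ 2 / (2 * (a + b) ^ 2) := by
  field_simp
  ring

lemma nig_beta_aux2 (a b c d : ℝ) (h : a + b ≠ 0) :
    1 / 2 * b * (d - (a * c + b * d) / (a + b)) ^ 2
      = b * a ^ 2 * (c - d) ^ 2 / (2 * (a + b) ^ 2) := by
  field_simp
  ring

/-- Associativity of the NIG summation operation. -/
theorem nigAdd_assoc (p q r : NIG) (hp : 0 < p.γ) (hq : 0 < q.γ) (hr : 0 < r.γ) :
    nigAdd (nigAdd p q) r = nigAdd p (nigAdd q r) := by
  have h12 : p.γ + q.γ ≠ 0 := by positivity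
  have h23 : q.γ + r.γ ≠ 0 := by positivity
  have h123 : p.γ + q.γ + r.γ ≠ 0 := by positivity
  have h123' : p.γ + (q.γ + r.γ) ≠ 0 := by positivity
  simp only [nigAdd, NIG.mk.injEq]
  refine ⟨?_, by ring, by ring, ?_⟩
  · field_simp
    ring
  · rw [nig_beta_aux1 p.γ q.γ p.δ q.δ h12, nig_beta_aux2 p.γ q.γ p.δ q.δ h12,
      nig_beta_aux1 q.γ r.γ q.δ r.δ h23, nig_beta_aux2 q.γ r.γ q.δ r.δ h23,
      nig_beta_aux1 (p.γ + q.γ) r.γ _ r.δ h123, nig_beta_aux2 (p.γ + q.γ) r.γ _ r.δ h123,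
      nig_beta_aux1 p.γ (q.γ + r.γ) p.δ _ h123', nig_beta_aux2 p.γ (q.γ + r.γ) p.δ _ h123']
    field_simp
    ring
end

section
/- Closed form of the β component (fused uncertainty) of an M-fold NIG fusion: let (δₘ,γₘ,αₘ,βₘ) for m = 1,…,M (M ≥ 1) be real parameter tuples with γₘ > 0 for all m, let δ̄ = (∑ₘ γₘδₘ)/(∑ₘ γₘ), and let (δ,γ,α,β) be the left-iterated NIG summation NIG₁ ⊕ ⋯ ⊕ NIG_M. Then β = ∑ₘ βₘ + (1/2)∑ₘ γₘ(δₘ − δ̄)², i.e., the fused β is the sum of the modality-specific β's plus the confidence-weighted deviation of each modality's prediction from the fused prediction. -/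
-- The value on the empty list is a junk value.
noncomputable def nigFold : List NIG → NIG
  | [] => ⟨0, 1, 2, 1⟩
  | hd :: tl => tl.foldl nigAdd hd

theorem Finset.sum_mul_sub_div_sq {ι : Type*} (s : Finset ι) (w x : ι → ℝ)
    (hw : ∑ i ∈ s, w i ≠ 0) :
    ∑ i ∈ s, w i * (x i - (∑ j ∈ s, w j * x j) / ∑ j ∈ s, w j) ^ 2
      = ∑ i ∈ s, w i * x i ^ 2 - (∑ i ∈ s, w i * x i) ^ 2 / ∑ i ∈ s, w i := by
  set W := ∑ j ∈ s, w j
  set m := (∑ j ∈ s, w j * x j) / W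
  have hm : ∑ j ∈ s, w j * x j = m * W := by simp only [m, div_mul_cancel₀ _ hw]
  have expand : ∀ i, w i * (x i - m) ^ 2 = w i * x i ^ 2 - 2 * m * (w i * x i) + m ^ 2 * w i :=
    fun i => by ring
  simp only [expand, Finset.sum_add_distrib, Finset.sum_sub_distrib, ← Finset.mul_sum, hm]
  field_simp
  ring

namespace NIG

def moments (p : NIG) : ℝ × ℝ × ℝ := (p.γ, p.γ * p.δ, 2 * p.β + p.γ * p.δ ^ 2)

theorem moments_nigAdd (p q : NIG) (h : p.γ + q.γ ≠ 0) :
    (nigAdd p q).moments = p.moments + q.moments := by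
  simp only [moments, nigAdd, Prod.mk_add_mk, Prod.mk.injEq]
  refine ⟨trivial, mul_div_cancel₀ _ h, ?_⟩
  field_simp
  ring

-- `(γ δ)² / γ = γ δ²` holds also at `γ = 0`, where `x / 0 = 0`.
theorem two_mul_beta_eq (p : NIG) :
    2 * p.β = p.moments.2.2 - p.moments.2.1 ^ 2 / p.moments.1 := by
  simp only [moments]
  field_simp
  ring

theorem moments_foldl_nigAdd (tl : List NIG) (hd : NIG) (hhd : 0 < hd.γ)
    (htl : ∀ q ∈ tl, 0 < q.γ) :
    (tl.foldl nigAdd hd).moments = hd.moments + (tl.map moments).sum := by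
  induction tl generalizing hd with
  | nil => simp
  | cons q tl ih =>
    have hq : 0 < q.γ := htl q List.mem_cons_self
    have hsum : 0 < (nigAdd hd q).γ := add_pos hhd hq
    rw [List.foldl_cons, ih _ hsum fun r hr => htl r (List.mem_cons_of_mem q hr),
      moments_nigAdd _ _ hsum.ne', List.map_cons, List.sum_cons, add_assoc]

theorem moments_nigFold (l : List NIG) (hl : l ≠ []) (hγ : ∀ q ∈ l, 0 < q.γ) :
    (nigFold l).moments = (l.map moments).sum := by
  obtain ⟨hd, tl, rfl⟩ := List.exists_cons_of_ne_nil hl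
  rw [nigFold, moments_foldl_nigAdd tl hd (hγ hd List.mem_cons_self)
    fun q hq => hγ q (List.mem_cons_of_mem hd hq), List.map_cons, List.sum_cons]

end NIG

/-- Closed form of the β component (fused uncertainty) of an M-fold NIG fusion. -/
theorem nigFold_beta (M : ℕ) (hM : 1 ≤ M) (p : Fin M → NIG)
    (hγ : ∀ m, 0 < (p m).γ) :
    (nigFold (List.ofFn p)).β
      = (∑ m, (p m).β)
        + (1 / 2) * ∑ m, (p m).γ *
            ((p m).δ - (∑ k, (p k).γ * (p k).δ) / (∑ k, (p k).γ)) ^ 2 := by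
  have hne : List.ofFn p ≠ [] := by
    simpa [List.ofFn_eq_nil_iff] using Nat.one_le_iff_ne_zero.mp hM
  have hmom : (nigFold (List.ofFn p)).moments = ∑ m, (p m).moments := by
    rw [NIG.moments_nigFold _ hne (List.forall_mem_ofFn_iff.mpr hγ), List.map_ofFn, List.sum_ofFn]
    rfl
  have hG : 0 < ∑ m, (p m).γ :=
    Finset.sum_pos (fun m _ => hγ m) (Finset.univ_nonempty_iff.mpr ⟨⟨0, hM⟩⟩)
  have hβ := NIG.two_mul_beta_eq (nigFold (List.ofFn p))
  rw [hmom] at hβ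
  simp only [NIG.moments, Prod.fst_sum, Prod.snd_sum, Finset.sum_add_distrib,
    ← Finset.mul_sum] at hβ
  rw [Finset.sum_mul_sub_div_sq _ _ _ hG.ne']
  linarith
end

section
/- Order invariance of multimodal NIG fusion: for any finite list of real parameter tuples (δₘ,γₘ,αₘ,βₘ), m = 1,…,M, with γₘ > 0 for all m, and any permutation π of {1,…,M}, the left-iterated NIG summation of the list in the original order equals, in all four components, the left-iterated NIG summation of the permuted list NIG_{π(1)} ⊕ ⋯ ⊕ NIG_{π(M)}. -/
/-- Invariant map: `nigAdd` becomes componentwise addition under `Φ`. -/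
noncomputable def Φ (p : NIG) : ℝ × ℝ × ℝ × ℝ :=
  (p.γ, p.γ * p.δ, p.α + 1 / 2, p.β + p.γ * p.δ ^ 2 / 2)

lemma Φ_add (p q : NIG) (hp : 0 < p.γ) (hq : 0 < q.γ) :
    Φ (nigAdd p q) = Φ p + Φ q := by
  have hne : p.γ + q.γ ≠ 0 := by positivity
  simp only [Φ, nigAdd, Prod.mk_add_mk, Prod.mk.injEq]
  refine ⟨trivial, ?_, by ring, ?_⟩
  · field_simp
  · field_simp
    ring

lemma Φ_inj (p q : NIG) (hp : 0 < p.γ) (hq : 0 < q.γ) (h : Φ p = Φ q) : p = q := by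
  simp only [Φ, Prod.mk.injEq] at h
  obtain ⟨h1, h2, h3, h4⟩ := h
  have hδ : p.δ = q.δ := by
    have := h2
    rw [h1] at this
    exact mul_left_cancel₀ (ne_of_gt hq) this
  have hα : p.α = q.α := by linarith
  have hβ : p.β = q.β := by
    rw [h1, hδ] at h4; linarith
  cases p; cases q
  simp_all

lemma foldl_phi (tl : List NIG) : ∀ hd : NIG, 0 < hd.γ → (∀ x ∈ tl, 0 < x.γ) →
    Φ (tl.foldl nigAdd hd) = Φ hd + (tl.map Φ).sum ∧ 0 < (tl.foldl nigAdd hd).γ := by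
  induction tl with
  | nil => intro hd hhd _; simp [hhd]
  | cons a l ih =>
    intro hd hhd h
    have ha : 0 < a.γ := h a (by simp)
    have hadd : 0 < (nigAdd hd a).γ := by
      simp only [nigAdd]; positivity
    obtain ⟨h1, h2⟩ := ih (nigAdd hd a) hadd (fun x hx => h x (by simp [hx]))
    refine ⟨?_, h2⟩
    simp only [List.foldl_cons] at *
    rw [h1, Φ_add hd a hhd ha]
    simp [add_assoc]

/-- Order invariance of multimodal NIG fusion: permuting the modalities does not
change the left-iterated NIG summation. -/
theorem nigFold_perm (M : ℕ) (hM : 1 ≤ M) (p : Fin M → NIG)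
    (hγ : ∀ m, 0 < (p m).γ) (π : Equiv.Perm (Fin M)) :
    nigFold (List.ofFn p) = nigFold (List.ofFn (fun m => p (π m))) := by
  obtain ⟨n, rfl⟩ : ∃ n, M = n + 1 := ⟨M - 1, (Nat.succ_pred_eq_of_pos hM).symm⟩
  have key : ∀ q : Fin (n + 1) → NIG, (∀ m, 0 < (q m).γ) →
      Φ (nigFold (List.ofFn q)) = ∑ i, Φ (q i) ∧ 0 < (nigFold (List.ofFn q)).γ := by
    intro q hq
    rw [List.ofFn_succ]
    obtain ⟨h1, h2⟩ := foldl_phi (List.ofFn fun i : Fin n => q i.succ) (q 0) (hq 0)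
      (by intro x hx; rw [List.mem_ofFn] at hx; obtain ⟨i, rfl⟩ := hx; exact hq _)
    refine ⟨?_, h2⟩
    show Φ (List.foldl nigAdd (q 0) _) = _
    rw [h1, List.map_ofFn, List.sum_ofFn, Fin.sum_univ_succ]
    rfl
  obtain ⟨h1, h2⟩ := key p hγ
  obtain ⟨h1', h2'⟩ := key (fun m => p (π m)) (fun m => hγ (π m))
  refine Φ_inj _ _ h2 h2' ?_
  rw [h1, h1', Equiv.sum_comp π (fun i => Φ (p i))]
end
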